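/- arXiv:1411.6182 — 2 statements merged into one kernel-verified Lean document; each statement's English description precedes it below -/
import Mathlib

section
/- Let κ ∈ ℝ with κ ≠ 0, λ > 0, and let n ≥ 1 be an integer. If u is an S⁺ₙ-solution of problem (P) for parameters (κ, λ), then the zeros of u in [0,1] are exactly the points j/n for j = 0, 1, …, n, and u(x + 1/n) = −u(x) for all x ∈ [0, 1 − 1/n]. In particular, all humps of u have the same shape, and the first hump is symmetric around 1/(2n). -/
/-!
The equation is autonomous, invariant under `x ↦ -x` and under `u ↦ -u`, and a solution is
determined by `(u, u')` at a single point. Let `T` be the first positive zero of `u` and `c` a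
critical point in `(0, T)` given by Rolle. Uniqueness makes `u` even about `c`, which forces
`T = 2c` and hence `u'(T) = -u'(0)`; uniqueness again, comparing `u` with `-u(· + T)` at `0`,
gives `u(x + T) = -u(x)`. So the zeros in `[0, 1]` are exactly the multiples of `T`, and counting
the `n - 1` interior ones gives `T = 1/n`.
-/

open Set Real Filter

noncomputable section

/-- `u` is twice continuously differentiable on `[a,b]`, satisfies
`1 + κ (u')² > 0` and the ODE `-u'' = λ u (1 + κ (u')²)^(3/2)` on `[a,b]`. -/
def SolODE (κ lam : ℝ) (u : ℝ → ℝ) (a b : ℝ) : Prop :=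
  (∀ x ∈ Set.Icc a b, DifferentiableAt ℝ u x) ∧
  (∀ x ∈ Set.Icc a b, DifferentiableAt ℝ (deriv u) x) ∧
  ContinuousOn (deriv (deriv u)) (Set.Icc a b) ∧
  (∀ x ∈ Set.Icc a b, 0 < 1 + κ * (deriv u x) ^ 2) ∧
  (∀ x ∈ Set.Icc a b,
    -(deriv (deriv u) x) = lam * u x * (1 + κ * (deriv u x) ^ 2) ^ ((3 : ℝ) / 2))

/-- `u` is a solution of problem (P) on `[0,1]` with Dirichlet boundary conditions. -/
def SolP (κ lam : ℝ) (u : ℝ → ℝ) : Prop :=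
  SolODE κ lam u 0 1 ∧ u 0 = 0 ∧ u 1 = 0

/-- `u` is an `S⁺ₙ`-solution of problem (P): a nontrivial solution with exactly
`n - 1` zeros in `(0,1)`, all zeros in `[0,1]` simple, and positive near `0`. -/
def SPlus (κ lam : ℝ) (n : ℕ) (u : ℝ → ℝ) : Prop :=
  SolP κ lam u ∧
  (∃ x ∈ Set.Icc (0 : ℝ) 1, u x ≠ 0) ∧
  {x ∈ Set.Ioo (0 : ℝ) 1 | u x = 0}.ncard = n - 1 ∧
  (∀ τ ∈ Set.Icc (0 : ℝ) 1, u τ = 0 → deriv u τ ≠ 0) ∧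
  (∃ δ > 0, ∀ x ∈ Set.Ioo (0 : ℝ) δ, 0 < u x)

/-- The constant `B = ∫₀¹ dθ/√(θ⁻⁴ - 1)`. -/
def Bconst : ℝ := ∫ θ in (0 : ℝ)..1, 1 / Real.sqrt ((θ ^ 4)⁻¹ - 1)

/-- The sup-norm of `u` over `[0,1]`. -/
def supNorm (u : ℝ → ℝ) : ℝ := sSup ((fun x => |u x|) '' Set.Icc (0 : ℝ) 1)

/-- The time map `J(λ, ξ) = √(-κ) ∫₀¹ ξ/√(1 - (1 - λκξ²(1-θ²)/2)⁻²) dθ`. -/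
def Jmap (κ lam ξ : ℝ) : ℝ :=
  Real.sqrt (-κ) *
    ∫ θ in (0 : ℝ)..1,
      ξ / Real.sqrt (1 - ((1 - lam * κ / 2 * ξ ^ 2 * (1 - θ ^ 2))⁻¹) ^ 2)


open Topology

section Uniqueness

variable {E : Type*} [NormedAddCommGroup E] [NormedSpace ℝ E]

theorem eqOn_Icc_of_hasDerivAt_of_contDiffOn {f : E → E} {G : Set E} (hG : IsOpen G)
    (hf : ContDiffOn ℝ 1 f G) {γ₁ γ₂ : ℝ → E} {p q c : ℝ}
    (hγ₁ : ∀ t ∈ Icc p q, HasDerivAt γ₁ (f (γ₁ t)) t ∧ γ₁ t ∈ G)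
    (hγ₂ : ∀ t ∈ Icc p q, HasDerivAt γ₂ (f (γ₂ t)) t ∧ γ₂ t ∈ G)
    (hc : c ∈ Icc p q) (heq : γ₁ c = γ₂ c) : EqOn γ₁ γ₂ (Icc p q) := by
  have hcont₁ : ContinuousOn γ₁ (Icc p q) := fun t ht ↦
    (hγ₁ t ht).1.continuousAt.continuousWithinAt
  have hcont₂ : ContinuousOn γ₂ (Icc p q) := fun t ht ↦
    (hγ₂ t ht).1.continuousAt.continuousWithinAt
  set K := γ₁ '' Icc p q ∪ γ₂ '' Icc p q
  have hK₁ : ∀ t ∈ Icc p q, γ₁ t ∈ K := fun t ht ↦ .inl ⟨t, ht, rfl⟩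
  have hK₂ : ∀ t ∈ Icc p q, γ₂ t ∈ K := fun t ht ↦ .inr ⟨t, ht, rfl⟩
  have hKG : K ⊆ G := by
    rintro _ (⟨t, ht, rfl⟩ | ⟨t, ht, rfl⟩)
    exacts [(hγ₁ t ht).2, (hγ₂ t ht).2]
  -- `C¹` on the open set `G` makes `f` locally Lipschitz there, hence Lipschitz on compact `K`.
  obtain ⟨L, hL⟩ : ∃ L, LipschitzOnWith L f K := by
    refine LocallyLipschitzOn.exists_lipschitzOnWith_of_compact
      ((isCompact_Icc.image_of_continuousOn hcont₁).union
        (isCompact_Icc.image_of_continuousOn hcont₂)) fun z hz ↦ ?_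
    obtain ⟨L, t, ht, hLt⟩ := (hf.contDiffAt (hG.mem_nhds (hKG hz))).exists_lipschitzOnWith
    exact ⟨L, t, mem_nhdsWithin_of_mem_nhds ht, hLt⟩
  intro x hx
  rcases le_total x c with hxc | hcx
  · have hsub : Icc p c ⊆ Icc p q := Icc_subset_Icc_right hc.2
    refine ODE_solution_unique_of_mem_Icc_left (v := fun _ ↦ f) (s := fun _ ↦ K)
      (fun _ _ ↦ hL) (hcont₁.mono hsub)
      (fun t ht ↦ (hγ₁ t (hsub (Ioc_subset_Icc_self ht))).1.hasDerivWithinAt)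
      (fun t ht ↦ hK₁ t (hsub (Ioc_subset_Icc_self ht))) (hcont₂.mono hsub)
      (fun t ht ↦ (hγ₂ t (hsub (Ioc_subset_Icc_self ht))).1.hasDerivWithinAt)
      (fun t ht ↦ hK₂ t (hsub (Ioc_subset_Icc_self ht))) heq ⟨hx.1, hxc⟩
  · have hsub : Icc c q ⊆ Icc p q := Icc_subset_Icc_left hc.1
    refine ODE_solution_unique_of_mem_Icc_right (v := fun _ ↦ f) (s := fun _ ↦ K)
      (fun _ _ ↦ hL) (hcont₁.mono hsub)
      (fun t ht ↦ (hγ₁ t (hsub (Ico_subset_Icc_self ht))).1.hasDerivWithinAt)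
      (fun t ht ↦ hK₁ t (hsub (Ico_subset_Icc_self ht))) (hcont₂.mono hsub)
      (fun t ht ↦ (hγ₂ t (hsub (Ico_subset_Icc_self ht))).1.hasDerivWithinAt)
      (fun t ht ↦ hK₂ t (hsub (Ico_subset_Icc_self ht))) heq ⟨hcx, hx.2⟩

end Uniqueness

theorem HasDerivAt.const_mul_comp_affine {f : ℝ → ℝ} {f' s d σ x : ℝ}
    (hf : HasDerivAt f f' (d + σ * x)) :
    HasDerivAt (fun y ↦ s * f (d + σ * y)) (s * σ * f') x := by
  have hA : HasDerivAt (fun y : ℝ ↦ d + σ * y) σ x := by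
    simpa using ((hasDerivAt_id x).const_mul σ).const_add d
  rw [show s * σ * f' = s * (f' * σ) by ring]
  exact (hf.comp x hA).const_mul s

/-- The phase-plane vector field of `-u'' = λ u (1 + κ u'²)^(3/2)`, on pairs `(u, u')`. -/
def odeField (κ lam : ℝ) (z : ℝ × ℝ) : ℝ × ℝ :=
  (z.2, -(lam * z.1 * (1 + κ * z.2 ^ 2) ^ ((3 : ℝ) / 2)))

theorem contDiffOn_odeField (κ lam : ℝ) :
    ContDiffOn ℝ 1 (odeField κ lam) {z | 0 < 1 + κ * z.2 ^ 2} := by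
  intro z hz
  have hpow : ContDiffAt ℝ 1 (fun z : ℝ × ℝ ↦ (1 + κ * z.2 ^ 2) ^ ((3 : ℝ) / 2)) z :=
    (contDiffAt_const.add (contDiffAt_const.mul (contDiffAt_snd.pow 2))).rpow_const_of_ne hz.ne'
  exact (contDiffAt_snd.prodMk
    ((contDiffAt_const.mul contDiffAt_fst).mul hpow).neg).contDiffWithinAt

namespace SolODE

variable {κ lam a b p q : ℝ} {u w : ℝ → ℝ}

theorem mono (hu : SolODE κ lam u a b) (h : Icc p q ⊆ Icc a b) : SolODE κ lam u p q :=
  ⟨fun x hx ↦ hu.1 x (h hx), fun x hx ↦ hu.2.1 x (h hx), hu.2.2.1.mono h,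
    fun x hx ↦ hu.2.2.2.1 x (h hx), fun x hx ↦ hu.2.2.2.2 x (h hx)⟩

theorem continuousOn (hu : SolODE κ lam u a b) : ContinuousOn u (Icc a b) := fun x hx ↦
  (hu.1 x hx).continuousAt.continuousWithinAt

theorem hasDerivAt_phase (hu : SolODE κ lam u a b) {x : ℝ} (hx : x ∈ Icc a b) :
    HasDerivAt (fun t ↦ (u t, deriv u t)) (odeField κ lam (u x, deriv u x)) x := by
  have hfield : odeField κ lam (u x, deriv u x) = (deriv u x, deriv (deriv u) x) := by
    simp only [odeField, Prod.mk.injEq, true_and]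
    linarith [hu.2.2.2.2 x hx]
  rw [hfield]
  exact (hu.1 x hx).hasDerivAt.prodMk (hu.2.1 x hx).hasDerivAt

theorem eqOn_of_eq_of_deriv_eq (hu : SolODE κ lam u a b) (hw : SolODE κ lam w a b) {c : ℝ}
    (hc : c ∈ Icc a b) (h₀ : u c = w c) (h₁ : deriv u c = deriv w c) : EqOn u w (Icc a b) :=
  fun x hx ↦ congrArg Prod.fst <| eqOn_Icc_of_hasDerivAt_of_contDiffOn
    (isOpen_lt continuous_const (by fun_prop)) (contDiffOn_odeField κ lam)
    (fun t ht ↦ ⟨hu.hasDerivAt_phase ht, hu.2.2.2.1 t ht⟩)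
    (fun t ht ↦ ⟨hw.hasDerivAt_phase ht, hw.2.2.2.1 t ht⟩) hc (Prod.ext h₀ h₁) hx

theorem comp_affine (hu : SolODE κ lam u a b) {s σ d : ℝ} (hs : s ^ 2 = 1) (hσ : σ ^ 2 = 1)
    (hmaps : MapsTo (fun y ↦ d + σ * y) (Icc p q) (Ioo a b)) :
    SolODE κ lam (fun x ↦ s * u (d + σ * x)) p q := by
  obtain ⟨hu₁, hu₂, hu₂c, hupos, hueq⟩ := hu
  have hmem : ∀ x ∈ Icc p q, d + σ * x ∈ Icc a b := fun _ hx ↦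
    Ioo_subset_Icc_self (hmaps hx)
  have hD : ∀ x ∈ Icc p q,
      deriv (fun x ↦ s * u (d + σ * x)) x = s * σ * deriv u (d + σ * x) := fun x hx ↦
    (hu₁ _ (hmem x hx)).hasDerivAt.const_mul_comp_affine.deriv
  -- `u` is differentiable on the open interval `(a, b)`, so `hD` holds near each point.
  have hDnhds : ∀ x ∈ Icc p q, deriv (fun x ↦ s * u (d + σ * x)) =ᶠ[𝓝 x]
      fun y ↦ s * σ * deriv u (d + σ * y) := by
    intro x hx
    have hopen : IsOpen ((fun y ↦ d + σ * y) ⁻¹' Ioo a b) :=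
      isOpen_Ioo.preimage (by fun_prop)
    filter_upwards [hopen.mem_nhds (hmaps hx)] with y hy
    exact (hu₁ _ (Ioo_subset_Icc_self hy)).hasDerivAt.const_mul_comp_affine.deriv
  have hD₂ : ∀ x ∈ Icc p q, HasDerivAt (deriv fun x ↦ s * u (d + σ * x))
      (s * deriv (deriv u) (d + σ * x)) x := by
    intro x hx
    have h := (hu₂ _ (hmem x hx)).hasDerivAt.const_mul_comp_affine (s := s * σ)
    rw [show s * σ * σ = s * σ ^ 2 by ring, hσ, mul_one] at h
    exact h.congr_of_eventuallyEq (hDnhds x hx)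
  have hsq : ∀ x ∈ Icc p q,
      deriv (fun x ↦ s * u (d + σ * x)) x ^ 2 = deriv u (d + σ * x) ^ 2 := by
    intro x hx
    rw [hD x hx, mul_pow, mul_pow, hs, hσ, one_mul, one_mul]
  refine ⟨fun x hx ↦ (hu₁ _ (hmem x hx)).hasDerivAt.const_mul_comp_affine.differentiableAt,
    fun x hx ↦ (hD₂ x hx).differentiableAt, ?_, fun x hx ↦ ?_, fun x hx ↦ ?_⟩
  · refine ContinuousOn.congr (f := fun y ↦ s * deriv (deriv u) (d + σ * y)) ?_
      fun x hx ↦ (hD₂ x hx).deriv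
    exact continuousOn_const.mul (hu₂c.comp (by fun_prop) hmem)
  · rw [hsq x hx]
    exact hupos _ (hmem x hx)
  · rw [hsq x hx, (hD₂ x hx).deriv]
    linear_combination s * hueq _ (hmem x hx)

theorem eqOn_comp_affine (hu : SolODE κ lam u a b) {s σ d c : ℝ} (hs : s ^ 2 = 1)
    (hσ : σ ^ 2 = 1) (hpq : Icc p q ⊆ Icc a b)
    (hmaps : MapsTo (fun y ↦ d + σ * y) (Ioo p q) (Ioo a b)) (hc : c ∈ Icc p q)
    (hcmaps : d + σ * c ∈ Ioo a b) (h₀ : u c = s * u (d + σ * c))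
    (h₁ : deriv u c = s * σ * deriv u (d + σ * c)) :
    EqOn u (fun x ↦ s * u (d + σ * x)) (Icc p q) := by
  rcases (hc.1.trans hc.2).eq_or_lt with rfl | hpq'
  · intro x hx
    obtain rfl : x = c := by linarith [hx.1, hx.2, hc.1, hc.2]
    exact h₀
  have hinterior : EqOn u (fun x ↦ s * u (d + σ * x)) (Ioo p q) := by
    intro x hx
    have hsub : Icc (min x c) (max x c) ⊆ Icc p q := Icc_subset_Icc
      (le_min hx.1.le hc.1) (max_le hx.2.le hc.2)
    refine (hu.mono (hsub.trans hpq)).eqOn_of_eq_of_deriv_eq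
      (hu.comp_affine hs hσ fun y hy ↦ ?_) ⟨min_le_right x c, le_max_right x c⟩ h₀ ?_
      ⟨min_le_left x c, le_max_left x c⟩
    · rcases eq_or_ne y c with rfl | hyc
      · exact hcmaps
      refine hmaps ⟨?_, ?_⟩ <;>
      · rcases hyc.lt_or_gt with h | h <;>
        rcases min_le_iff.mp hy.1 with h' | h' <;> rcases le_max_iff.mp hy.2 with h'' | h'' <;>
        linarith [hx.1, hx.2, hc.1, hc.2]
    · rw [(hu.1 _ (Ioo_subset_Icc_self hcmaps)).hasDerivAt.const_mul_comp_affine.deriv, h₁]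
  have hmapsIcc : MapsTo (fun y ↦ d + σ * y) (Icc p q) (Icc a b) := by
    have h := hmaps.closure (by fun_prop)
    rwa [closure_Ioo hpq'.ne, closure_Ioo (hcmaps.1.trans hcmaps.2).ne] at h
  exact hinterior.of_subset_closure (hu.continuousOn.mono hpq)
    (continuousOn_const.mul (hu.continuousOn.comp (by fun_prop) hmapsIcc)) Ioo_subset_Icc_self
    (closure_Ioo hpq'.ne).ge

end SolODE

theorem exists_first_zero {u : ℝ → ℝ} {a b c : ℝ} (hcont : ContinuousOn u (Icc a b))
    (hab : a < b) (hb : u b = 0) (hac : a < c) (hne : ∀ x ∈ Ioo a c, u x ≠ 0) :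
    ∃ T ∈ Ioc a b, u T = 0 ∧ ∀ x ∈ Ioo a T, u x ≠ 0 := by
  set m := min c b
  have hZ : IsCompact (Icc m b ∩ u ⁻¹' {0}) :=
    isCompact_Icc.of_isClosed_subset ((hcont.mono (Icc_subset_Icc_left (lt_min hac hab).le))
      |>.preimage_isClosed_of_isClosed isClosed_Icc isClosed_singleton) inter_subset_left
  obtain ⟨T, ⟨⟨hmT, hTb⟩, hT₀⟩, hleast⟩ :=
    hZ.exists_isLeast ⟨b, ⟨min_le_right c b, le_rfl⟩, hb⟩
  refine ⟨T, ⟨(lt_min hac hab).trans_le hmT, hTb⟩, hT₀, fun x hx hux ↦ ?_⟩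
  rcases lt_or_ge x m with hxm | hmx
  · exact hne x ⟨hx.1, hxm.trans_le (min_le_left c b)⟩ hux
  · exact (hleast ⟨⟨hmx, hx.2.le.trans hTb⟩, hux⟩).not_gt hx.2

theorem deriv_eq_neg_of_apply_sub_eq {u : ℝ → ℝ} {T : ℝ} (hT : 0 < T)
    (hd₀ : DifferentiableAt ℝ u 0) (hdT : DifferentiableAt ℝ u T)
    (hsymm : ∀ x ∈ Icc 0 T, u (T - x) = u x) : deriv u T = -deriv u 0 := by
  have hreflect : HasDerivWithinAt u (-deriv u T) (Icc 0 T) 0 := by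
    refine (HasDerivAt.comp_const_sub T 0 ?_).hasDerivWithinAt.congr
      (fun x hx ↦ (hsymm x hx).symm) (hsymm 0 ⟨le_rfl, hT.le⟩).symm
    rw [sub_zero]
    exact hdT.hasDerivAt
  have := (uniqueDiffOn_Icc hT 0 ⟨le_rfl, hT.le⟩).eq_deriv _ hd₀.hasDerivAt.hasDerivWithinAt
    hreflect
  linarith

namespace SolODE

variable {κ lam a b : ℝ} {u : ℝ → ℝ}

theorem apply_two_mul_sub_eq (hu : SolODE κ lam u a b) {c : ℝ} (hc : c ∈ Ioo a b)
    (hdc : deriv u c = 0) {x : ℝ} (hx : x ∈ Icc a b) (hx' : 2 * c - x ∈ Icc a b) :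
    u (2 * c - x) = u x := by
  have hsymm := hu.eqOn_comp_affine (s := 1) (σ := -1) (d := 2 * c)
    (p := max a (2 * c - b)) (q := min b (2 * c - a)) (c := c) (by norm_num) (by norm_num)
    (Icc_subset_Icc (le_max_left _ _) (min_le_left _ _))
    (fun y hy ↦ ⟨by linarith [min_le_right b (2 * c - a), hy.2],
      by linarith [le_max_right a (2 * c - b), hy.1]⟩)
    ⟨max_le hc.1.le (by linarith [hc.2]), le_min hc.2.le (by linarith [hc.1])⟩
    (by constructor <;> linarith [hc.1, hc.2]) (by ring_nf)
    (by rw [show 2 * c + -1 * c = c by ring, hdc]; ring)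
    ⟨max_le hx.1 (by linarith [hx'.2]), le_min hx.2 (by linarith [hx'.1])⟩
  rw [hsymm]
  ring_nf

theorem apply_sub_eq_of_first_zero (hu : SolODE κ lam u 0 b) (h₀ : u 0 = 0) {T : ℝ}
    (hT : T ∈ Ioc 0 b) (hT₀ : u T = 0) (hne : ∀ x ∈ Ioo 0 T, u x ≠ 0) :
    ∀ x ∈ Icc 0 T, u (T - x) = u x := by
  obtain ⟨c, hc, hdc⟩ := exists_deriv_eq_zero hT.1
    (hu.continuousOn.mono (Icc_subset_Icc_right hT.2)) (h₀.trans hT₀.symm)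
  have hcb : c ∈ Ioo 0 b := ⟨hc.1, hc.2.trans_le hT.2⟩
  -- Evenness about `c` moves the zeros `0` and `T` to `2c` and `2c - T`; both must be `0` or `T`.
  have hTc : T = 2 * c := by
    rcases lt_trichotomy (2 * c) T with h | h | h
    · refine absurd ?_ (hne (2 * c) ⟨by linarith [hc.1], h⟩)
      have := hu.apply_two_mul_sub_eq hcb hdc ⟨le_rfl, hT.1.le.trans hT.2⟩
        ⟨by linarith [hc.1], by linarith [hT.2]⟩
      rwa [sub_zero, h₀] at this
    · exact h.symm
    · refine absurd ?_ (hne (2 * c - T) ⟨by linarith [hc.2], by linarith [hc.2]⟩)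
      have := hu.apply_two_mul_sub_eq hcb hdc ⟨hT.1.le, hT.2⟩
        ⟨by linarith [hc.2], by linarith [hc.2, hT.2]⟩
      rwa [hT₀] at this
  intro x hx
  rw [hTc]
  exact hu.apply_two_mul_sub_eq hcb hdc ⟨hx.1, hx.2.trans hT.2⟩
    ⟨by linarith [hx.2], by linarith [hx.1, hT.2]⟩

theorem apply_add_eq_neg_of_first_zero (hu : SolODE κ lam u 0 b) (h₀ : u 0 = 0) {T : ℝ}
    (hT : T ∈ Ioc 0 b) (hT₀ : u T = 0) (hne : ∀ x ∈ Ioo 0 T, u x ≠ 0) :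
    ∀ x ∈ Icc 0 (b - T), u (x + T) = -u x := by
  rcases hT.2.eq_or_lt with rfl | hTb
  · intro x hx
    obtain rfl : x = 0 := by linarith [hx.1, hx.2]
    rw [zero_add, hT₀, h₀, neg_zero]
  have hmem : ∀ {x}, x ∈ Icc 0 T → x ∈ Icc 0 b := fun hx ↦ ⟨hx.1, hx.2.trans hT.2⟩
  have hder : deriv u T = -deriv u 0 :=
    deriv_eq_neg_of_apply_sub_eq hT.1 (hu.1 0 (hmem ⟨le_rfl, hT.1.le⟩))
      (hu.1 T (hmem ⟨hT.1.le, le_rfl⟩)) (hu.apply_sub_eq_of_first_zero h₀ hT hT₀ hne)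
  -- `x ↦ -u (x + T)` has the same Cauchy data at `0` as `u`.
  have hshift := hu.eqOn_comp_affine (s := -1) (σ := 1) (d := T) (p := 0) (q := b - T) (c := 0)
    (by norm_num) (by norm_num) (Icc_subset_Icc le_rfl (by linarith [hT.1]))
    (fun y hy ↦ ⟨by linarith [hy.1, hT.1], by linarith [hy.2]⟩) ⟨le_rfl, by linarith⟩
    (by constructor <;> linarith [hT.1]) (by simp [hT₀, h₀]) (by simp [hder])
  intro x hx
  rw [hshift hx]
  show u (x + T) = -(-1 * u (T + 1 * x))
  rw [one_mul, add_comm T x]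
  ring

end SolODE

section Antiperiodic

variable {u : ℝ → ℝ} {L T : ℝ}

theorem apply_add_nat_mul_eq_neg_one_pow_mul (hT : 0 ≤ T)
    (hshift : ∀ x ∈ Icc 0 (L - T), u (x + T) = -u x) (j : ℕ) {r : ℝ} (hr : 0 ≤ r)
    (hrj : r + j * T ≤ L) : u (r + j * T) = (-1) ^ j * u r := by
  induction j with
  | zero => simp
  | succ j ih =>
    push_cast at hrj ⊢
    have hjT : 0 ≤ j * T := by positivity
    rw [show r + (j + 1) * T = r + j * T + T by ring, hshift _ ⟨by positivity, by linarith⟩,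
      ih (by linarith), pow_succ]
    ring

theorem apply_eq_zero_iff_exists_nat_mul (hT : 0 < T)
    (hshift : ∀ x ∈ Icc 0 (L - T), u (x + T) = -u x) (h₀ : u 0 = 0)
    (hne : ∀ x ∈ Ioo 0 T, u x ≠ 0) {x : ℝ} (hx : x ∈ Icc 0 L) :
    u x = 0 ↔ ∃ j : ℕ, x = j * T := by
  constructor
  · intro hux
    set j := ⌊x / T⌋₊
    have hjx : j * T ≤ x := (le_div_iff₀ hT).mp (Nat.floor_le (div_nonneg hx.1 hT.le))
    have hxj : x < (j + 1) * T := (div_lt_iff₀ hT).mp (Nat.lt_floor_add_one _)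
    have hr := apply_add_nat_mul_eq_neg_one_pow_mul hT.le hshift j (sub_nonneg.mpr hjx)
      (by linarith [hx.2])
    rw [sub_add_cancel, hux, eq_comm, mul_eq_zero] at hr
    refine ⟨j, ?_⟩
    by_contra hxj'
    exact hne (x - j * T) ⟨by contrapose! hxj'; linarith, by linarith⟩
      (hr.resolve_left (pow_ne_zero _ (by norm_num)))
  · rintro ⟨j, rfl⟩
    have := apply_add_nat_mul_eq_neg_one_pow_mul hT.le hshift j le_rfl (by simpa using hx.2)
    rwa [zero_add, h₀, mul_zero] at this

theorem exists_nat_mul_eq_and_zeros_eq (hT : 0 < T)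
    (hshift : ∀ x ∈ Icc 0 (L - T), u (x + T) = -u x) (h₀ : u 0 = 0)
    (hne : ∀ x ∈ Ioo 0 T, u x ≠ 0) (hL : 0 ≤ L) (hL₀ : u L = 0) :
    ∃ k : ℕ, k * T = L ∧ {x ∈ Icc 0 L | u x = 0} = {x | ∃ j ≤ k, x = j * T} := by
  have hzero := fun {x} hx ↦ apply_eq_zero_iff_exists_nat_mul (x := x) hT hshift h₀ hne hx
  obtain ⟨k, hk⟩ := (hzero ⟨hL, le_rfl⟩).mp hL₀
  refine ⟨k, hk.symm, Set.ext fun x ↦ ⟨fun ⟨hx, hux⟩ ↦ ?_, ?_⟩⟩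
  · obtain ⟨j, rfl⟩ := (hzero hx).mp hux
    refine ⟨j, ?_, rfl⟩
    exact_mod_cast le_of_mul_le_mul_right (hk ▸ hx.2) hT
  · rintro ⟨j, hj, rfl⟩
    have hjT : j * T ≤ L := hk ▸ mul_le_mul_of_nonneg_right (by exact_mod_cast hj) hT.le
    exact ⟨⟨by positivity, hjT⟩, (hzero ⟨by positivity, hjT⟩).mpr ⟨j, rfl⟩⟩

end Antiperiodic

theorem ncard_Ioo_inter_nat_mul (k : ℕ) {T : ℝ} (hT : 0 < T) :
    (Ioo 0 (k * T) ∩ {x | ∃ j ≤ k, x = j * T}).ncard = k - 1 := by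
  have hset : Ioo 0 (k * T) ∩ {x | ∃ j ≤ k, x = j * T} =
      ((Finset.Ioo 0 k).image fun j : ℕ ↦ (j : ℝ) * T : Set ℝ) := by
    ext x
    simp only [mem_inter_iff, mem_Ioo, mem_ofPred_eq, Finset.coe_image, Finset.coe_Ioo,
      mem_image]
    constructor
    · rintro ⟨⟨hx₀, hxk⟩, j, -, rfl⟩
      refine ⟨j, ⟨?_, ?_⟩, rfl⟩
      · exact_mod_cast pos_of_mul_pos_left hx₀ hT.le
      · exact_mod_cast lt_of_mul_lt_mul_right hxk hT.le
    · rintro ⟨j, ⟨hj₀, hjk⟩, rfl⟩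
      refine ⟨⟨by positivity, by gcongr⟩, j, hjk.le, rfl⟩
  rw [hset, ncard_coe_finset, Finset.card_image_of_injective _ fun i j hij ↦ by
    exact_mod_cast mul_right_cancel₀ hT.ne' hij, Nat.card_Ioo, Nat.sub_zero]

theorem stmt4_general (κ lam : ℝ) (n : ℕ) (hn : 1 ≤ n)
    (u : ℝ → ℝ) (hu : SPlus κ lam n u) :
    ({x ∈ Set.Icc (0 : ℝ) 1 | u x = 0} = {x : ℝ | ∃ j : ℕ, j ≤ n ∧ x = (j : ℝ) / n}) ∧
    (∀ x ∈ Set.Icc (0 : ℝ) (1 - 1 / n), u (x + 1 / n) = -u x) := by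
  obtain ⟨⟨hsol, hu₀, hu₁⟩, -, hcard, -, δ, hδ, hpos⟩ := hu
  obtain ⟨T, hT, huT, hne⟩ := exists_first_zero hsol.continuousOn one_pos hu₁ hδ
    fun x hx ↦ (hpos x hx).ne'
  have hshift := hsol.apply_add_eq_neg_of_first_zero hu₀ hT huT hne
  obtain ⟨k, hkT, hzeros⟩ :=
    exists_nat_mul_eq_and_zeros_eq hT.1 hshift hu₀ hne zero_le_one hu₁
  have hkn : k = n := by
    have hIoo : {x ∈ Ioo (0 : ℝ) 1 | u x = 0} =
        Ioo 0 (k * T) ∩ {x | ∃ j ≤ k, x = j * T} := by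
      rw [← hzeros, hkT]
      exact Set.ext fun x ↦ ⟨fun ⟨hx, hux⟩ ↦ ⟨hx, Ioo_subset_Icc_self hx, hux⟩,
        fun ⟨hx, _, hux⟩ ↦ ⟨hx, hux⟩⟩
    rw [hIoo, ncard_Ioo_inter_nat_mul k hT.1] at hcard
    have hk : k ≠ 0 := by rintro rfl; simp at hkT
    omega
  subst hkn
  have hTk : T = 1 / k := by rw [← hkT]; field_simp
  refine ⟨?_, by rwa [← hTk]⟩
  simp_rw [hzeros, hTk, mul_one_div]

theorem stmt4 (κ lam : ℝ) (hκ : κ ≠ 0) (hlam : 0 < lam) (n : ℕ) (hn : 1 ≤ n)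
    (u : ℝ → ℝ) (hu : SPlus κ lam n u) :
    ({x ∈ Set.Icc (0 : ℝ) 1 | u x = 0} = {x : ℝ | ∃ j : ℕ, j ≤ n ∧ x = (j : ℝ) / n}) ∧
    (∀ x ∈ Set.Icc (0 : ℝ) (1 - 1 / n), u (x + 1 / n) = -u x) :=
  stmt4_general κ lam n hn u hu
end
end

section
/- Let κ < 0. For every ε > 0 there exists M > 0 such that: whenever λ > M and u is an S⁺₁-solution of problem (P) for parameters (κ, λ), one has |u'(0) − 1/√(−κ)| < ε. That is, the initial slope u'_λ(0) of the positive solution tends to 1/√(−κ) as λ → ∞. -/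
open Set Real Filter

noncomputable section

/-!
Along a solution, `E = (1 + κ u'²)^(-1/2) - κ λ u² / 2` is conserved. Testing the equation
against `sin (π x)` gives an interior point `x` with `λ (1 + κ u'(x)²)^(3/2) ≤ π²`. When `κ < 0`,
`κ λ u(x)² ≤ 0`, so conservation of `E` yields `1 + κ u'(0)² ≤ 1 + κ u'(x)² ≤ (π² / λ)^(2/3)`;
as `u'(0) ≥ 0`, this forces `u'(0) → 1 / √(-κ)` when `λ → ∞`.
-/

open Topology intervalIntegral

theorem finite_zeros_of_deriv_ne_zero {u : ℝ → ℝ} {K : Set ℝ} (hK : IsCompact K)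
    (hd : ∀ x ∈ K, DifferentiableAt ℝ u x) (hsimple : ∀ x ∈ K, u x = 0 → deriv u x ≠ 0) :
    {x ∈ K | u x = 0}.Finite := by
  by_contra hinf
  obtain ⟨τ, hτK, hacc⟩ := Set.Infinite.exists_accPt_of_subset_isCompact hinf hK (sep_subset _ _)
  have hzero : ∃ᶠ y in 𝓝[≠] τ, u y ∈ ({0} : Set ℝ) :=
    (accPt_iff_frequently_nhdsNE.mp hacc).mono fun y hy => hy.2
  have huτ : u τ = 0 := isClosed_singleton.mem_of_frequently_of_tendsto hzero
    ((hd τ hτK).continuousAt.tendsto.mono_left nhdsWithin_le_nhds)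
  exact hzero ((hd τ hτK).hasDerivAt.eventually_ne (hsimple τ hτK huτ))

theorem exists_neg_deriv_deriv_le_pi_sq_mul {u : ℝ → ℝ}
    (hd1 : ∀ x ∈ Icc (0 : ℝ) 1, DifferentiableAt ℝ u x)
    (hd2 : ∀ x ∈ Icc (0 : ℝ) 1, DifferentiableAt ℝ (deriv u) x)
    (hc2 : ContinuousOn (deriv (deriv u)) (Icc 0 1)) (h0 : u 0 = 0) (h1 : u 1 = 0) :
    ∃ x ∈ Ioo (0 : ℝ) 1, -deriv (deriv u) x ≤ π ^ 2 * u x := by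
  by_contra! hlt
  set G : ℝ → ℝ := fun x => (deriv (deriv u) x + π ^ 2 * u x) * sin (π * x)
  have hderiv : ∀ x ∈ uIcc (0 : ℝ) 1,
      HasDerivAt (fun y => deriv u y * sin (π * y) - u y * (π * cos (π * y))) (G x) x := by
    intro x hx
    rw [uIcc_of_le zero_le_one] at hx
    have hsin := (hasDerivAt_sin (π * x)).comp x ((hasDerivAt_id x).const_mul π)
    have hcos := ((hasDerivAt_cos (π * x)).comp x ((hasDerivAt_id x).const_mul π)).const_mul π
    refine (((hd2 x hx).hasDerivAt.fun_mul hsin).fun_sub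
      ((hd1 x hx).hasDerivAt.fun_mul hcos)).congr_deriv ?_
    simp only [G, Function.comp_apply]
    ring
  have hint : IntervalIntegrable G MeasureTheory.volume 0 1 := by
    refine ContinuousOn.intervalIntegrable ?_
    rw [uIcc_of_le zero_le_one]
    have hcont_u : ContinuousOn u (Icc 0 1) :=
      fun x hx => (hd1 x hx).continuousAt.continuousWithinAt
    exact (hc2.add (continuousOn_const.mul hcont_u)).mul (by fun_prop)
  have hG : ∫ x in (0 : ℝ)..1, G x = 0 := by
    rw [integral_eq_sub_of_hasDerivAt hderiv hint]
    simp [h0, h1]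
  have hpos : 0 < ∫ x in (0 : ℝ)..1, -G x := by
    refine intervalIntegral_pos_of_pos_on hint.neg (fun x hx => ?_) zero_lt_one
    have hsin : 0 < sin (π * x) :=
      sin_pos_of_pos_of_lt_pi (by nlinarith [pi_pos, hx.1]) (by nlinarith [pi_pos, hx.2])
    have := mul_pos (sub_pos.mpr (hlt x hx)) hsin
    simp only [G]
    linarith
  rw [integral_neg, hG] at hpos
  simp at hpos

theorem abs_sub_one_div_sqrt_le {k s : ℝ} (hk : 0 < k) (hs : 0 ≤ s) (h : k * s ^ 2 ≤ 1) :
    |s - 1 / √k| ≤ (1 - k * s ^ 2) / √k := by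
  have hr : 0 < √k := sqrt_pos.mpr hk
  have hr2 : √k ^ 2 = k := sq_sqrt hk.le
  have hrs : √k * s ≤ 1 := by nlinarith [mul_nonneg hr.le hs]
  have hdiff : 1 / √k - s = (1 - √k * s) / √k := by field_simp
  rw [abs_sub_comm, hdiff, abs_of_nonneg (div_nonneg (by linarith) hr.le)]
  refine div_le_div_of_nonneg_right ?_ hr.le
  nlinarith [mul_nonneg hr.le hs]

/-- A first integral of the equation `-u'' = λ u (1 + κ u'²)^(3/2)`. -/
def energy (κ lam : ℝ) (u : ℝ → ℝ) (x : ℝ) : ℝ :=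
  (1 + κ * deriv u x ^ 2) ^ (-(1 : ℝ) / 2) - κ * lam * u x ^ 2 / 2

namespace SolODE

variable {κ lam a b : ℝ} {u : ℝ → ℝ}

theorem hasDerivAt_energy (hs : SolODE κ lam u a b) {x : ℝ} (hx : x ∈ Icc a b) :
    HasDerivAt (energy κ lam u) 0 x := by
  obtain ⟨hd1, hd2, -, hpos, hode⟩ := hs
  set t := 1 + κ * deriv u x ^ 2
  have ht : 0 < t := hpos x hx
  have hq : HasDerivAt (fun y => 1 + κ * deriv u y ^ 2)
      (κ * (2 * deriv u x * deriv (deriv u) x)) x := by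
    refine ((((hd2 x hx).hasDerivAt.fun_pow 2).const_mul κ).const_add 1).congr_deriv ?_
    ring
  have hE := ((hasDerivAt_rpow_const (p := -(1 : ℝ) / 2) (Or.inl ht.ne')).comp x hq).sub
    ((((hd1 x hx).hasDerivAt.pow 2).const_mul (κ * lam)).div_const 2)
  have h32 : -(1 : ℝ) / 2 - 1 = -((3 : ℝ) / 2) := by norm_num
  have hw : deriv (deriv u) x = -(lam * u x * t ^ ((3 : ℝ) / 2)) := by linarith [hode x hx]
  rw [h32, rpow_neg ht.le, hw] at hE
  refine hE.congr_deriv ?_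
  field_simp
  ring

theorem energy_eq (hs : SolODE κ lam u a b) {x : ℝ} (hx : x ∈ Icc a b) :
    energy κ lam u x = energy κ lam u a :=
  constant_of_has_deriv_right_zero
    (fun _ hy => (hs.hasDerivAt_energy hy).continuousAt.continuousWithinAt)
    (fun _ hy => (hs.hasDerivAt_energy (Ico_subset_Icc_self hy)).hasDerivWithinAt) x hx

end SolODE

namespace SPlus

variable {κ lam : ℝ} {u : ℝ → ℝ}

theorem zeros_Ioo_eq_empty (hu : SPlus κ lam 1 u) : {x ∈ Ioo (0 : ℝ) 1 | u x = 0} = ∅ := by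
  obtain ⟨⟨⟨hd1, -⟩, -⟩, -, hncard, hsimple, -⟩ := hu
  have hfin : {x ∈ Ioo (0 : ℝ) 1 | u x = 0}.Finite :=
    (finite_zeros_of_deriv_ne_zero isCompact_Icc hd1 hsimple).subset
      fun x hx => ⟨Ioo_subset_Icc_self hx.1, hx.2⟩
  exact (ncard_eq_zero hfin).mp hncard

theorem pos (hu : SPlus κ lam 1 u) {x : ℝ} (hx : x ∈ Ioo (0 : ℝ) 1) : 0 < u x := by
  obtain ⟨δ, hδ, hposδ⟩ := hu.2.2.2.2
  have hcont : ContinuousOn u (Ioo 0 1) :=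
    fun y hy => (hu.1.1.1 y (Ioo_subset_Icc_self hy)).continuousAt.continuousWithinAt
  obtain ⟨p, hp0, hp⟩ := exists_between (lt_min hδ hx.1)
  obtain ⟨hpδ, hpx⟩ := lt_min_iff.mp hp
  have hup : 0 < u p := hposδ p ⟨hp0, hpδ⟩
  by_contra! hux
  obtain ⟨c, hc, huc⟩ :=
    isPreconnected_Ioo.intermediate_value hx ⟨hp0, hpx.trans hx.2⟩ hcont ⟨hux, hup.le⟩
  have hmem : c ∈ {x ∈ Ioo (0 : ℝ) 1 | u x = 0} := ⟨hc, huc⟩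
  rw [hu.zeros_Ioo_eq_empty] at hmem
  exact hmem

theorem deriv_zero_nonneg (hu : SPlus κ lam 1 u) : 0 ≤ deriv u 0 := by
  obtain ⟨⟨⟨hd1, -⟩, hb0, -⟩, -, -, -, δ, hδ, hposδ⟩ := hu
  have hslope := hasDerivAt_iff_tendsto_slope.mp (hd1 0 ⟨le_rfl, zero_le_one⟩).hasDerivAt
  refine ge_of_tendsto (hslope.mono_left (nhdsGT_le_nhdsNE 0)) ?_
  filter_upwards [Ioo_mem_nhdsGT hδ] with y hy
  rw [slope_def_field, hb0, sub_zero, sub_zero]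
  exact (div_pos (hposδ y hy) hy.1).le

theorem mul_rpow_le_pi_sq (hκ : κ ≤ 0) (hlam : 0 ≤ lam) (hu : SPlus κ lam 1 u) :
    lam * (1 + κ * deriv u 0 ^ 2) ^ ((3 : ℝ) / 2) ≤ π ^ 2 := by
  obtain ⟨hs, hb0, hb1⟩ := hu.1
  obtain ⟨hd1, hd2, hc2, hpos, hode⟩ := hu.1.1
  obtain ⟨x, hx, hxle⟩ := exists_neg_deriv_deriv_le_pi_sq_mul hd1 hd2 hc2 hb0 hb1
  have hxI : x ∈ Icc (0 : ℝ) 1 := Ioo_subset_Icc_self hx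
  have h0I : (0 : ℝ) ∈ Icc (0 : ℝ) 1 := ⟨le_rfl, zero_le_one⟩
  set t := 1 + κ * deriv u x ^ 2
  have hcurv : lam * t ^ ((3 : ℝ) / 2) ≤ π ^ 2 := by
    rw [hode x hxI, mul_right_comm] at hxle
    exact le_of_mul_le_mul_right hxle (hu.pos hx)
  have hslope : 1 + κ * deriv u 0 ^ 2 ≤ t := by
    have hE := hs.energy_eq hxI
    simp only [energy, hb0] at hE
    rw [← rpow_le_rpow_iff_of_neg (hpos x hxI) (hpos 0 h0I) (by norm_num : -(1 : ℝ) / 2 < 0)]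
    nlinarith [mul_nonpos_of_nonpos_of_nonneg (mul_nonpos_of_nonpos_of_nonneg hκ hlam)
      (sq_nonneg (u x))]
  calc lam * (1 + κ * deriv u 0 ^ 2) ^ ((3 : ℝ) / 2) ≤ lam * t ^ ((3 : ℝ) / 2) := by
        gcongr
        exact (hpos 0 h0I).le
    _ ≤ π ^ 2 := hcurv

end SPlus

theorem stmt16 (κ : ℝ) (hκ : κ < 0) :
    ∀ ε > 0, ∃ M > 0, ∀ lam : ℝ, M < lam →
      ∀ u : ℝ → ℝ, SPlus κ lam 1 u →
        |deriv u 0 - 1 / Real.sqrt (-κ)| < ε := by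
  intro ε hε
  have hk : 0 < -κ := neg_pos.mpr hκ
  have hr : 0 < √(-κ) := sqrt_pos.mpr hk
  set c := ε * √(-κ)
  have hc : 0 < c ^ ((3 : ℝ) / 2) := rpow_pos_of_pos (mul_pos hε hr) _
  refine ⟨π ^ 2 / c ^ ((3 : ℝ) / 2), by positivity, fun lam hlam u hu => ?_⟩
  have hlam0 : 0 < lam := lt_trans (by positivity) hlam
  have hpos : 0 < 1 + κ * deriv u 0 ^ 2 := hu.1.1.2.2.2.1 0 ⟨le_rfl, zero_le_one⟩
  have hlt : 1 + κ * deriv u 0 ^ 2 < c := by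
    by_contra! hge
    have := rpow_le_rpow (mul_pos hε hr).le hge (by norm_num : (0 : ℝ) ≤ 3 / 2)
    rw [div_lt_iff₀ hc] at hlam
    nlinarith [hu.mul_rpow_le_pi_sq hκ.le hlam0.le]
  calc |deriv u 0 - 1 / √(-κ)| ≤ (1 - -κ * deriv u 0 ^ 2) / √(-κ) :=
        abs_sub_one_div_sqrt_le hk hu.deriv_zero_nonneg (by linarith)
    _ < ε := by rw [div_lt_iff₀ hr]; linarith
end
end
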